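/- Let t ≥ 1 be an odd integer, ε a real number, L ≥ 1 an integer, and set c = exp(−ε·t) and b = exp(−ε·(t−1)). With the same 2t-state bond weights as in the Floquet-TRS mapping (B(a,a′) = 1 if a = a′, c if a ≠ a′ within a block of t states, b across blocks), the periodic-boundary generalized Potts partition function satisfies ∑_{s : ZMod L → Fin(2t)} ∏_{i ∈ ZMod L} B(s_i, s_{i+1}) = (2t−2)·(1 − e^{−εt})^L + (1 − t·e^{−ε(t−1)} + (t−1)·e^{−εt})^L + (1 + t·e^{−ε(t−1)} + (t−1)·e^{−εt})^L. -/
import Mathlib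


open BigOperators

/-- Bond Boltzmann weight of the generalized `2t`-state Potts model emerging from
the Floquet-TRS random phase model at odd time `t`: the first `t` states (ladder /
time-parallel pairings) and the last `t` states (twisted / time-reversed pairings)
form two blocks; equal states have weight `1`, distinct states in the same block have
weight `c = e^{−εt}` (type-I domain wall), and states in different blocks have weight
`b = e^{−ε(t−1)}` (type-II domain wall, odd `t`). -/
noncomputable def gPottsWeightOdd (t : ℕ) (ε : ℝ) (a a' : Fin (2 * t)) : ℝ :=
  if a = a' then 1
  else if ((a : ℕ) < t ↔ (a' : ℕ) < t) then Real.exp (-ε * t)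
  else Real.exp (-ε * ((t : ℝ) - 1))


open Finset

variable {α : Type*} [Fintype α] [DecidableEq α]

lemma pow_apply_paths (M : Matrix α α ℝ) :
    ∀ (n : ℕ) (a b : α), (M ^ n) a b =
      ∑ s : Fin n → α,
        (∏ i : Fin n, M ((Fin.cons a s : Fin (n+1) → α) i.castSucc) (s i)) *
          (if (Fin.cons a s : Fin (n+1) → α) (Fin.last n) = b then 1 else 0) := by
  intro n
  induction n with
  | zero =>
      intro a b
      simp [Matrix.one_apply]
  | succ n ih =>
      intro a b
      have h1 : (M ^ (n+1)) a b = ∑ x, M a x * (M ^ n) x b := by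
        rw [pow_succ']; exact Matrix.mul_apply
      rw [h1]
      rw [← (Fin.consEquiv (fun _ : Fin (n+1) => α)).sum_comp]
      rw [Fintype.sum_prod_type]
      refine Finset.sum_congr rfl fun x _ => ?_
      rw [ih x b, Finset.mul_sum]
      refine Finset.sum_congr rfl fun s _ => ?_
      have hprod : (∏ i : Fin (n+1), M ((Fin.cons a (Fin.cons x s) : Fin (n+2) → α) i.castSucc)
            ((Fin.cons x s : Fin (n+1) → α) i))
          = M a x * ∏ i : Fin n, M ((Fin.cons x s : Fin (n+1) → α) i.castSucc) (s i) := by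
        rw [Fin.prod_univ_succ]
        simp [← Fin.succ_castSucc]
      have hind : ((Fin.cons a (Fin.cons x s) : Fin (n+2) → α) (Fin.last (n+1)) : α)
          = (Fin.cons x s : Fin (n+1) → α) (Fin.last n) := by
        rw [← Fin.succ_last, Fin.cons_succ]
      have he : ((Fin.consEquiv fun _ : Fin (n+1) => α) (x, s)) = Fin.cons x s := rfl
      simp only [he, hprod, hind]
      ring

lemma trace_pow_cyclic (M : Matrix α α ℝ) (n : ℕ) :
    (M ^ (n+1)).trace = ∑ s : Fin (n+1) → α, ∏ i : Fin (n+1), M (s i) (s (i+1)) := by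
  have key : ∀ s : Fin (n+1) → α,
      (∏ i : Fin (n+1), M ((Fin.cons (s (Fin.last n + 1)) (fun j => s (j + 1)) : Fin (n+2) → α) i.castSucc)
        (s (i + 1)))
      = ∏ i : Fin (n+1), M (s i) (s (i+1)) := by
    intro s
    refine Finset.prod_congr rfl fun i _ => ?_
    congr 1
    induction i using Fin.cases with
    | zero => simp [Fin.last_add_one]
    | succ j =>
        rw [← Fin.succ_castSucc, Fin.cons_succ, Fin.coeSucc_eq_succ]
  rw [Matrix.trace]
  simp only [Matrix.diag]
  calc ∑ a, (M ^ (n+1)) a a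
      = ∑ a, ∑ s : Fin (n+1) → α,
          (∏ i : Fin (n+1), M ((Fin.cons a s : Fin (n+2) → α) i.castSucc) (s i)) *
            (if (Fin.cons a s : Fin (n+2) → α) (Fin.last (n+1)) = a then 1 else 0) := by
        exact Finset.sum_congr rfl fun a _ => pow_apply_paths M (n+1) a a
    _ = ∑ s : Fin (n+1) → α, ∑ a,
          (∏ i : Fin (n+1), M ((Fin.cons a s : Fin (n+2) → α) i.castSucc) (s i)) *
            (if s (Fin.last n) = a then 1 else 0) := by
        rw [Finset.sum_comm]
        refine Finset.sum_congr rfl fun a _ => Finset.sum_congr rfl fun s _ => ?_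
        rw [← Fin.succ_last, Fin.cons_succ]
    _ = ∑ s : Fin (n+1) → α,
          (∏ i : Fin (n+1), M ((Fin.cons (s (Fin.last n)) s : Fin (n+2) → α) i.castSucc) (s i)) := by
        refine Finset.sum_congr rfl fun s _ => ?_
        simp [mul_ite, mul_one, mul_zero]
    _ = ∑ s : Fin (n+1) → α, ∏ i : Fin (n+1), M (s i) (s (i+1)) := by
        refine (Fintype.sum_bijective (fun σ : Fin (n+1) → α => fun i => σ (i+1))
          (Equiv.arrowCongr (Equiv.addRight (1 : Fin (n+1))).symm (Equiv.refl α)).bijective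
          _ _ (fun σ => (key σ).symm)).symm

lemma cyclic_sum_eq_trace (M : Matrix α α ℝ) (L : ℕ) [NeZero L] :
    ∑ s : ZMod L → α, ∏ i : ZMod L, M (s i) (s (i+1)) = (M ^ L).trace := by
  obtain ⟨n, rfl⟩ := Nat.exists_eq_succ_of_ne_zero (NeZero.ne L)
  exact (trace_pow_cyclic M n).symm

def sg (t : ℕ) (a : Fin (2*t)) : ℝ := if (a : ℕ) < t then 1 else -1

lemma sg_mul_self (t : ℕ) (a : Fin (2*t)) : sg t a * sg t a = 1 := by
  unfold sg; split_ifs <;> norm_num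

lemma sum_sg (t : ℕ) : ∑ a : Fin (2*t), sg t a = 0 := by
  unfold sg
  rw [Fin.sum_univ_eq_sum_range (fun i => if i < t then (1:ℝ) else -1)]
  rw [Finset.range_eq_Ico, ← Finset.sum_Ico_consecutive _ (Nat.zero_le t) (by omega : t ≤ 2*t)]
  have h1 : ∑ i ∈ Finset.Ico 0 t, (if i < t then (1:ℝ) else -1) = t := by
    rw [Finset.sum_congr rfl (fun i hi => if_pos (Finset.mem_Ico.mp hi).2)]
    simp
  have h2 : ∑ i ∈ Finset.Ico t (2*t), (if i < t then (1:ℝ) else -1) = -t := by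
    rw [Finset.sum_congr rfl (fun i hi => if_neg (by
      have := (Finset.mem_Ico.mp hi).1; omega))]
    rw [Finset.sum_const, Nat.card_Ico]
    have : 2*t - t = t := by omega
    rw [this]; simp
  rw [h1, h2]; ring

noncomputable def Esig (t : ℕ) (x y z : ℝ) : Matrix (Fin (2*t)) (Fin (2*t)) ℝ :=
  Matrix.of fun a a' => (if a = a' then x else 0) + y + z * sg t a * sg t a'

lemma Esig_mul (t : ℕ) (x y z x' y' z' : ℝ) :
    Esig t x y z * Esig t x' y' z'
      = Esig t (x*x') (x*y' + x'*y + 2*t*(y*y')) (x*z' + x'*z + 2*t*(z*z')) := by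
  ext a a'
  rw [Matrix.mul_apply]
  simp only [Esig, Matrix.of_apply]
  have expand : ∀ k : Fin (2*t),
      ((if a = k then x else 0) + y + z * sg t a * sg t k) *
        ((if k = a' then x' else 0) + y' + z' * sg t k * sg t a')
      = ((if a = k then (if k = a' then x * x' else 0) else 0))
        + ((if a = k then x * (y' + z' * sg t k * sg t a') else 0))
        + ((if k = a' then x' * (y + z * sg t a * sg t k) else 0))
        + ((y * y') + (y * z' * sg t a') * sg t k + (y' * z * sg t a) * sg t k
            + (z * z' * sg t a * sg t a') * (sg t k * sg t k)) := by
    intro k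
    split_ifs <;> ring
  have hA : ∑ _k : Fin (2*t), y*y' = 2*t*(y*y') := by
    rw [Finset.sum_const]
    simp only [Finset.card_univ, Fintype.card_fin, nsmul_eq_mul]
    push_cast; ring
  have hB : ∑ k : Fin (2*t), y * z' * sg t a' * sg t k = 0 := by
    rw [← Finset.mul_sum, sum_sg, mul_zero]
  have hC : ∑ k : Fin (2*t), y' * z * sg t a * sg t k = 0 := by
    rw [← Finset.mul_sum, sum_sg, mul_zero]
  have hD : ∑ k : Fin (2*t), z * z' * sg t a * sg t a' * (sg t k * sg t k)
      = 2*t*(z * z' * sg t a * sg t a') := by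
    simp only [sg_mul_self, mul_one]
    rw [Finset.sum_const]
    simp only [Finset.card_univ, Fintype.card_fin, nsmul_eq_mul]
    push_cast; ring
  rw [Finset.sum_congr rfl fun k _ => expand k]
  simp only [Finset.sum_add_distrib, Finset.sum_ite_eq, Finset.sum_ite_eq',
    Finset.mem_univ, if_true]
  rw [hA, hB, hC, hD]
  rcases eq_or_ne a a' with h | h
  · simp only [h, if_pos rfl]
    ring
  · simp only [if_neg h]
    ring

lemma Esig_one (t : ℕ) : Esig t 1 0 0 = (1 : Matrix (Fin (2*t)) (Fin (2*t)) ℝ) := by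
  ext a a'
  simp [Esig, Matrix.one_apply]

lemma Esig_pow (t : ℕ) (ht : 1 ≤ t) (x μ ν : ℝ) (L : ℕ) :
    (Esig t x ((μ-x)/(2*t)) ((ν-x)/(2*t))) ^ L
      = Esig t (x^L) ((μ^L-x^L)/(2*t)) ((ν^L-x^L)/(2*t)) := by
  have ht' : (2*t : ℝ) ≠ 0 := by positivity
  induction L with
  | zero => simp [Esig_one]
  | succ L ih =>
      rw [pow_succ, ih, Esig_mul]
      have hy : x^L * ((μ-x)/(2*↑t)) + x*((μ^L - x^L)/(2*↑t))
          + 2*↑t*((μ^L-x^L)/(2*↑t)*((μ-x)/(2*↑t))) = (μ^(L+1)-x^(L+1))/(2*↑t) := by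
        field_simp; ring
      have hz : x^L * ((ν-x)/(2*↑t)) + x*((ν^L - x^L)/(2*↑t))
          + 2*↑t*((ν^L-x^L)/(2*↑t)*((ν-x)/(2*↑t))) = (ν^(L+1)-x^(L+1))/(2*↑t) := by
        field_simp; ring
      rw [hy, hz, ← pow_succ]

lemma Esig_trace (t : ℕ) (x y z : ℝ) :
    (Esig t x y z).trace = 2*t*(x + y) + ∑ a : Fin (2*t), z * (sg t a * sg t a) := by
  rw [Matrix.trace]
  simp only [Matrix.diag, Esig, Matrix.of_apply, if_pos rfl]
  rw [Finset.sum_add_distrib, Finset.sum_add_distrib, Finset.sum_const, Finset.sum_const]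
  simp only [Finset.card_univ, Fintype.card_fin, nsmul_eq_mul]
  push_cast
  refine congrArg₂ (· + ·) (by ring) (Finset.sum_congr rfl fun a _ => by ring)

lemma Esig_trace' (t : ℕ) (x y z : ℝ) :
    (Esig t x y z).trace = 2*t*(x + y + z) := by
  rw [Esig_trace]
  simp only [sg_mul_self, mul_one, Finset.sum_const, Finset.card_univ, Fintype.card_fin,
    nsmul_eq_mul]
  push_cast; ring

lemma gPotts_eq_Esig (t : ℕ) (ε : ℝ) :
    Matrix.of (gPottsWeightOdd t ε)
      = Esig t (1 - Real.exp (-ε*t))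
          ((Real.exp (-ε*t) + Real.exp (-ε*((t:ℝ)-1)))/2)
          ((Real.exp (-ε*t) - Real.exp (-ε*((t:ℝ)-1)))/2) := by
  ext a a'
  simp only [Matrix.of_apply, gPottsWeightOdd, Esig, sg]
  rcases eq_or_ne a a' with h | h
  · subst h
    rw [if_pos rfl, if_pos rfl]
    split_ifs <;> ring
  · rw [if_neg h, if_neg h]
    by_cases ha : (a:ℕ) < t <;> by_cases ha' : (a':ℕ) < t <;>
      simp [ha, ha'] <;> ring

theorem main (t : ℕ) (ht : 1 ≤ t) (hodd : Odd t)
    (ε : ℝ) (L : ℕ) [NeZero L] :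
    (∑ s : ZMod L → Fin (2 * t), ∏ i : ZMod L, gPottsWeightOdd t ε (s i) (s (i + 1)))
      = (2 * (t : ℝ) - 2) * (1 - Real.exp (-ε * t)) ^ L
        + (1 - (t : ℝ) * Real.exp (-ε * ((t : ℝ) - 1))
            + ((t : ℝ) - 1) * Real.exp (-ε * t)) ^ L
        + (1 + (t : ℝ) * Real.exp (-ε * ((t : ℝ) - 1))
            + ((t : ℝ) - 1) * Real.exp (-ε * t)) ^ L := by
  have ht' : (2*(t:ℝ)) ≠ 0 := by positivity
  set c := Real.exp (-ε*t) with hc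
  set b := Real.exp (-ε*((t:ℝ)-1)) with hb
  have h0 : ∑ s : ZMod L → Fin (2 * t), ∏ i : ZMod L, gPottsWeightOdd t ε (s i) (s (i + 1))
      = ((Matrix.of (gPottsWeightOdd t ε)) ^ L).trace :=
    cyclic_sum_eq_trace (Matrix.of (gPottsWeightOdd t ε)) L
  rw [h0, gPotts_eq_Esig]
  have hy : (c + b)/2 = ((1 + ((t:ℝ)-1)*c + t*b) - (1 - c))/(2*t) := by
    field_simp; ring
  have hz : (c - b)/2 = ((1 + ((t:ℝ)-1)*c - t*b) - (1 - c))/(2*t) := by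
    field_simp; ring
  rw [hy, hz, Esig_pow t ht, Esig_trace']
  have expand2t : (2*(t:ℝ)) * ((1-c)^L + ((1 + ((t:ℝ)-1)*c + t*b)^L - (1-c)^L)/(2*t)
      + ((1 + ((t:ℝ)-1)*c - t*b)^L - (1-c)^L)/(2*t))
      = (2*(t:ℝ) - 2)*(1-c)^L + (1 + ((t:ℝ)-1)*c - t*b)^L + (1 + ((t:ℝ)-1)*c + t*b)^L := by
    field_simp; ring
  rw [expand2t]
  ring_nf

/-- Periodic-boundary generalized Potts partition function for odd
`t`:
`∑_s ∏_i B(s_i, s_{i+1}) = (2t−2)(1 − e^{−εt})^L + (1 − t e^{−ε(t−1)} + (t−1)e^{−εt})^L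
  + (1 + t e^{−ε(t−1)} + (t−1)e^{−εt})^L`. -/
theorem gpotts_partition_floquet_trs_pbc (t : ℕ) (ht : 1 ≤ t) (hodd : Odd t)
    (ε : ℝ) (L : ℕ) [NeZero L] :
    (∑ s : ZMod L → Fin (2 * t), ∏ i : ZMod L, gPottsWeightOdd t ε (s i) (s (i + 1)))
      = (2 * (t : ℝ) - 2) * (1 - Real.exp (-ε * t)) ^ L
        + (1 - (t : ℝ) * Real.exp (-ε * ((t : ℝ) - 1))
            + ((t : ℝ) - 1) * Real.exp (-ε * t)) ^ L
        + (1 + (t : ℝ) * Real.exp (-ε * ((t : ℝ) - 1))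
            + ((t : ℝ) - 1) * Real.exp (-ε * t)) ^ L := by
  exact main t ht hodd ε L
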